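/- Let ζ > 0 and let (μ₁, φ₁) and (μ₂, φ₂) be eigenpairs of the beam problem with μ₁ ≠ μ₂. Then ∫₀¹ φ₁(x) φ₂(x) dx = 0; that is, eigenfunctions corresponding to distinct eigenvalues are orthogonal in L²(0,1). -/

import Mathlib

open Set MeasureTheory intervalIntegral

/-- `Dv m f x` is the `m`-th derivative of `f` on the interval `[0,1]`. -/
noncomputable def Dv (m : ℕ) (f : ℝ → ℝ) (x : ℝ) : ℝ :=
  iteratedDerivWithin m f (Icc (0:ℝ) 1) x

/-- The beam boundary conditions. -/
def BeamBC (ζ : ℝ) (f : ℝ → ℝ) : Prop :=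
  f 0 = 0 ∧ Dv 1 f 0 = 0 ∧ Dv 2 f 0 = 0 ∧
  Dv 2 f 1 - ζ * Dv 4 f 1 = 0 ∧
  ζ * Dv 5 f 1 - Dv 3 f 1 = 0 ∧
  ζ * Dv 3 f 1 = 0

/-- An eigenpair `(μ, φ)` of the beam problem. -/
def BeamEigenpair (ζ μ : ℝ) (φ : ℝ → ℝ) : Prop :=
  ContDiffOn ℝ 6 φ (Icc (0:ℝ) 1) ∧ BeamBC ζ φ ∧
  (¬ ∀ x ∈ Icc (0:ℝ) 1, φ x = 0) ∧
  (∀ x ∈ Icc (0:ℝ) 1, Dv 4 φ x - ζ * Dv 6 φ x = μ * φ x)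

/-!
The operator `L = D⁴ - ζ D⁶` is symmetric under the beam boundary conditions: integrating
`∫ (L f) g` by parts until both factors carry the same number of derivatives leaves the energy form
`∫ f″ g″ + ζ ∫ f‴ g‴`, the boundary terms vanishing at `0` by the conditions on `g` and at `1` by
those on `f`. Hence `μ₁ ∫ φ₁ φ₂ = μ₂ ∫ φ₁ φ₂`.
-/

lemma Dv_zero (f : ℝ → ℝ) : Dv 0 f = f := iteratedDerivWithin_zero

lemma uIcc_zero_one : uIcc (0:ℝ) 1 = Icc 0 1 := uIcc_of_le zero_le_one

section Smooth

variable {n k : ℕ} {f g : ℝ → ℝ}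

lemma ContDiffOn.continuousOn_Dv (hf : ContDiffOn ℝ n f (Icc 0 1)) {m : ℕ} (hm : m ≤ n) :
    ContinuousOn (Dv m f) (Icc 0 1) :=
  hf.continuousOn_iteratedDerivWithin (by exact_mod_cast hm) (uniqueDiffOn_Icc one_pos)

lemma ContDiffOn.hasDerivWithinAt_Dv (hf : ContDiffOn ℝ n f (Icc 0 1)) {m : ℕ} (hm : m < n)
    {x : ℝ} (hx : x ∈ Icc (0:ℝ) 1) :
    HasDerivWithinAt (Dv m f) (Dv (m + 1) f x) (Icc 0 1) x := by
  have h := (hf.differentiableOn_iteratedDerivWithin (by exact_mod_cast hm)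
    (uniqueDiffOn_Icc one_pos) x hx).hasDerivWithinAt
  rwa [Dv, iteratedDerivWithin_succ]

lemma ContDiffOn.intervalIntegrable_Dv_mul_Dv (hf : ContDiffOn ℝ n f (Icc 0 1))
    (hg : ContDiffOn ℝ k g (Icc 0 1)) {a b : ℕ} (ha : a ≤ n) (hb : b ≤ k) :
    IntervalIntegrable (fun x ↦ Dv a f x * Dv b g x) volume 0 1 :=
  ContinuousOn.intervalIntegrable <|
    uIcc_zero_one ▸ (hf.continuousOn_Dv ha).mul (hg.continuousOn_Dv hb)

lemma integral_Dv_mul_Dv_succ (hf : ContDiffOn ℝ n f (Icc 0 1))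
    (hg : ContDiffOn ℝ k g (Icc 0 1)) {a b : ℕ} (ha : a < n) (hb : b < k) :
    ∫ x in (0:ℝ)..1, Dv a f x * Dv (b + 1) g x
      = Dv a f 1 * Dv b g 1 - Dv a f 0 * Dv b g 0
        - ∫ x in (0:ℝ)..1, Dv (a + 1) f x * Dv b g x := by
  refine integral_mul_deriv_eq_deriv_mul_of_hasDerivWithinAt ?_ ?_ ?_ ?_
  · simpa only [uIcc_zero_one] using fun x hx ↦ hf.hasDerivWithinAt_Dv ha hx
  · simpa only [uIcc_zero_one] using fun x hx ↦ hg.hasDerivWithinAt_Dv hb hx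
  · exact ContinuousOn.intervalIntegrable (uIcc_zero_one ▸ hf.continuousOn_Dv ha)
  · exact ContinuousOn.intervalIntegrable (uIcc_zero_one ▸ hg.continuousOn_Dv hb)

end Smooth

namespace BeamBC

variable {ζ : ℝ} {f : ℝ → ℝ}

lemma Dv_three_one (hζ : ζ ≠ 0) (hf : BeamBC ζ f) : Dv 3 f 1 = 0 :=
  (mul_eq_zero.1 hf.2.2.2.2.2).resolve_left hζ

lemma Dv_five_one (hζ : ζ ≠ 0) (hf : BeamBC ζ f) : Dv 5 f 1 = 0 := by
  have h := hf.2.2.2.2.1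
  rw [hf.Dv_three_one hζ, sub_zero] at h
  exact (mul_eq_zero.1 h).resolve_left hζ

end BeamBC

noncomputable def beamEnergy (ζ : ℝ) (f g : ℝ → ℝ) : ℝ :=
  (∫ x in (0:ℝ)..1, Dv 2 f x * Dv 2 g x) + ζ * ∫ x in (0:ℝ)..1, Dv 3 f x * Dv 3 g x

lemma beamEnergy_comm (ζ : ℝ) (f g : ℝ → ℝ) : beamEnergy ζ f g = beamEnergy ζ g f := by
  simp only [beamEnergy, mul_comm (Dv _ f _)]

theorem integral_beam_mul_eq_beamEnergy {ζ : ℝ} (hζ : ζ ≠ 0) {f g : ℝ → ℝ}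
    (hf : ContDiffOn ℝ 6 f (Icc 0 1)) (hg : ContDiffOn ℝ 3 g (Icc 0 1))
    (hfBC : BeamBC ζ f) (hgBC : BeamBC ζ g) :
    ∫ x in (0:ℝ)..1, (Dv 4 f x - ζ * Dv 6 f x) * g x = beamEnergy ζ f g := by
  have hf₃ := hfBC.Dv_three_one hζ
  have hf₅ := hfBC.Dv_five_one hζ
  obtain ⟨-, -, -, hf₂, -, -⟩ := hfBC
  obtain ⟨hg₀, hg₁, hg₂, -⟩ := hgBC
  have hsplit : ∫ x in (0:ℝ)..1, (Dv 4 f x - ζ * Dv 6 f x) * g x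
      = (∫ x in (0:ℝ)..1, Dv 4 f x * g x) - ζ * ∫ x in (0:ℝ)..1, Dv 6 f x * g x := by
    have hint (m : ℕ) (hm : m ≤ 6) : IntervalIntegrable (fun x ↦ Dv m f x * g x) volume 0 1 := by
      simpa only [Dv_zero] using hf.intervalIntegrable_Dv_mul_Dv hg hm (Nat.zero_le 3)
    rw [← intervalIntegral.integral_const_mul,
      ← integral_sub (hint 4 (by norm_num)) ((hint 6 le_rfl).const_mul ζ)]
    simp only [sub_mul, mul_assoc]
  have ibp (a b : ℕ) (ha : a < 6) (hb : b < 3) := integral_Dv_mul_Dv_succ hf hg ha hb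
  have ibp₃₀ := ibp 3 0 (by norm_num) (by norm_num)
  have ibp₂₁ := ibp 2 1 (by norm_num) (by norm_num)
  have ibp₅₀ := ibp 5 0 (by norm_num) (by norm_num)
  have ibp₄₁ := ibp 4 1 (by norm_num) (by norm_num)
  have ibp₃₂ := ibp 3 2 (by norm_num) (by norm_num)
  simp only [Nat.reduceAdd, Dv_zero] at ibp₃₀ ibp₂₁ ibp₅₀ ibp₄₁ ibp₃₂
  rw [hsplit, beamEnergy]
  linear_combination ibp₃₀ - ibp₂₁ - ζ * (ibp₃₂ - ibp₄₁ + ibp₅₀)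
    + (g 1 - ζ * Dv 2 g 1) * hf₃ - ζ * g 1 * hf₅ - Dv 1 g 1 * hf₂
    + (ζ * Dv 5 f 0 - Dv 3 f 0) * hg₀ + (Dv 2 f 0 - ζ * Dv 4 f 0) * hg₁ + ζ * Dv 3 f 0 * hg₂

lemma BeamEigenpair.integral_mul {ζ μ : ℝ} {φ : ℝ → ℝ} (h : BeamEigenpair ζ μ φ) (g : ℝ → ℝ) :
    ∫ x in (0:ℝ)..1, (Dv 4 φ x - ζ * Dv 6 φ x) * g x = μ * ∫ x in (0:ℝ)..1, φ x * g x := by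
  rw [← intervalIntegral.integral_const_mul]
  refine integral_congr fun x hx ↦ ?_
  rw [uIcc_zero_one] at hx
  simp only [h.2.2.2 x hx, mul_assoc]

/-- Eigenfunctions of the beam problem corresponding to distinct eigenvalues are
orthogonal in `L²(0,1)`. -/
theorem stmt_6 (ζ : ℝ) (hζ : 0 < ζ) (μ₁ μ₂ : ℝ) (φ₁ φ₂ : ℝ → ℝ)
    (h₁ : BeamEigenpair ζ μ₁ φ₁) (h₂ : BeamEigenpair ζ μ₂ φ₂) (hμ : μ₁ ≠ μ₂) :
    ∫ x in (0:ℝ)..1, φ₁ x * φ₂ x = 0 := by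
  have key : μ₁ * ∫ x in (0:ℝ)..1, φ₁ x * φ₂ x = μ₂ * ∫ x in (0:ℝ)..1, φ₁ x * φ₂ x :=
    calc μ₁ * ∫ x in (0:ℝ)..1, φ₁ x * φ₂ x
        = ∫ x in (0:ℝ)..1, (Dv 4 φ₁ x - ζ * Dv 6 φ₁ x) * φ₂ x := (h₁.integral_mul φ₂).symm
      _ = beamEnergy ζ φ₁ φ₂ := integral_beam_mul_eq_beamEnergy hζ.ne' h₁.1
          (h₂.1.of_le (by norm_num)) h₁.2.1 h₂.2.1
      _ = beamEnergy ζ φ₂ φ₁ := beamEnergy_comm ζ φ₁ φ₂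
      _ = ∫ x in (0:ℝ)..1, (Dv 4 φ₂ x - ζ * Dv 6 φ₂ x) * φ₁ x :=
          (integral_beam_mul_eq_beamEnergy hζ.ne' h₂.1 (h₁.1.of_le (by norm_num))
            h₂.2.1 h₁.2.1).symm
      _ = μ₂ * ∫ x in (0:ℝ)..1, φ₂ x * φ₁ x := h₂.integral_mul φ₁
      _ = μ₂ * ∫ x in (0:ℝ)..1, φ₁ x * φ₂ x := by simp only [mul_comm (φ₂ _)]
  exact (mul_eq_mul_right_iff.1 key).resolve_left hμ
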